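/- arXiv:1408.0994 — 2 statements merged into one kernel-verified Lean document; each statement's English description precedes it below -/
import Mathlib

section
/- Suppose P = A · B, where A and B are (m+n)×(m+n) matrices over K blocked in the same way as P (with blocks A₄, A₃, A₂, A₁ and B₄, B₃, B₂, B₁, where A₄ and B₄ are m×m), and suppose the leading principal block A₄ and the trailing principal block B₁ are invertible. Then rank A₃ + rank B₃ ≥ r₃ and rank A₂ + rank B₂ ≥ max(r₂, n + m − r₁ − r₄). -/
/-!
Writing `A = [[A₄, A₃], [A₂, A₁]]` and `B = [[B₄, B₃], [B₂, B₁]]`, the off-diagonal blocks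
`P₃ = A₄ B₃ + A₃ B₁` and `P₂ = A₂ B₄ + A₁ B₂` give the bounds by `r₃` and `r₂` through
subadditivity of rank. For the bound by `n + m - r₁ - r₄`: since `A` is invertible, its bottom
block row `[A₂ A₁]` has a right inverse, and eliminating `A₁ = (P₁ - A₂ B₃) B₁⁻¹` turns it into
`A₂ Y' + P₁ W' = 1`, whence `n ≤ rank A₂ + r₁`. Dually, the left block column of `B` has a left
inverse, and eliminating `B₄ = A₄⁻¹ (P₄ - A₃ B₂)` gives `m ≤ r₄ + rank B₂`.
-/

open Matrix

namespace Matrix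

theorem rank_add_le {K : Type*} [Field K] {m n : Type*} [Fintype n] (A B : Matrix m n K) :
    (A + B).rank ≤ A.rank + B.rank := by
  rw [rank, rank, rank, mulVecLin_add]
  refine (Submodule.finrank_mono ?_).trans (Submodule.finrank_add_le_finrank_add_finrank _ _)
  rintro _ ⟨v, rfl⟩
  exact Submodule.add_mem_sup ⟨v, rfl⟩ ⟨v, rfl⟩

variable {K : Type*} [Field K] {l o p q : Type*} [Fintype l] [Fintype o] [Fintype p] [Fintype q]

theorem card_le_rank_add_rank_of_mul_add_mul_eq_one [DecidableEq o]
    (X : Matrix o p K) (Y : Matrix p o K) (Z : Matrix o q K) (W : Matrix q o K)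
    (h : X * Y + Z * W = 1) : Fintype.card o ≤ X.rank + Z.rank :=
  calc Fintype.card o = (X * Y + Z * W).rank := by rw [h, rank_one]
    _ ≤ (X * Y).rank + (Z * W).rank := rank_add_le _ _
    _ ≤ X.rank + Z.rank := add_le_add (rank_mul_le_left _ _) (rank_mul_le_left _ _)

theorem card_le_rank_add_rank_mul_add_mul_of_right_inv [DecidableEq o] {A₂ : Matrix o l K}
    {A₁ : Matrix o o K} {Y : Matrix l o K} {W : Matrix o o K} (hrow : A₂ * Y + A₁ * W = 1)
    (B₃ : Matrix l o K) {B₁ : Matrix o o K} (hB₁ : IsUnit B₁) :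
    Fintype.card o ≤ A₂.rank + (A₂ * B₃ + A₁ * B₁).rank := by
  refine card_le_rank_add_rank_of_mul_add_mul_eq_one _ (Y - B₃ * B₁⁻¹ * W) _ (B₁⁻¹ * W) ?_
  rw [← hrow]
  simp only [Matrix.mul_sub, Matrix.add_mul, Matrix.mul_assoc,
    mul_nonsing_inv_cancel_left _ _ ((isUnit_iff_isUnit_det B₁).mp hB₁)]
  abel

theorem exists_bottom_row_right_inv_of_isUnit_fromBlocks [DecidableEq l] [DecidableEq o]
    {A₄ : Matrix l l K} {A₃ : Matrix l o K} {A₂ : Matrix o l K} {A₁ : Matrix o o K}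
    (hA : IsUnit (fromBlocks A₄ A₃ A₂ A₁)) :
    ∃ (Y : Matrix l o K) (W : Matrix o o K), A₂ * Y + A₁ * W = 1 := by
  obtain ⟨C, hC⟩ := hA.exists_right_inv
  refine ⟨C.toBlocks₁₂, C.toBlocks₂₂, ?_⟩
  have := congr_arg toBlocks₂₂ hC
  rwa [← fromBlocks_toBlocks C, fromBlocks_multiply, ← fromBlocks_one, toBlocks_fromBlocks₂₂,
    toBlocks_fromBlocks₂₂] at this

theorem exists_left_column_left_inv_of_isUnit_fromBlocks [DecidableEq l] [DecidableEq o]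
    {B₄ : Matrix l l K} {B₃ : Matrix l o K} {B₂ : Matrix o l K} {B₁ : Matrix o o K}
    (hB : IsUnit (fromBlocks B₄ B₃ B₂ B₁)) :
    ∃ (Y : Matrix l l K) (W : Matrix l o K), Y * B₄ + W * B₂ = 1 := by
  obtain ⟨D, hD⟩ := hB.exists_left_inv
  refine ⟨D.toBlocks₁₁, D.toBlocks₁₂, ?_⟩
  have := congr_arg toBlocks₁₁ hD
  rwa [← fromBlocks_toBlocks D, fromBlocks_multiply, ← fromBlocks_one, toBlocks_fromBlocks₁₁,
    toBlocks_fromBlocks₁₁] at this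

theorem card_le_rank_mul_add_mul_add_rank_of_left_inv [DecidableEq l] {B₄ : Matrix l l K}
    {B₂ : Matrix o l K} {Y : Matrix l l K} {W : Matrix l o K} (hcol : Y * B₄ + W * B₂ = 1)
    {A₄ : Matrix l l K} (hA₄ : IsUnit A₄) (A₃ : Matrix l o K) :
    Fintype.card l ≤ (A₄ * B₄ + A₃ * B₂).rank + B₂.rank := by
  have hrow : B₂ᵀ * Wᵀ + B₄ᵀ * Yᵀ = 1 := by
    rw [← transpose_mul, ← transpose_mul, ← transpose_add, add_comm, hcol, transpose_one]
  have := card_le_rank_add_rank_mul_add_mul_of_right_inv hrow A₃ᵀ ((isUnit_transpose A₄).mpr hA₄)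
  rwa [← transpose_mul, ← transpose_mul, ← transpose_add, rank_transpose, rank_transpose,
    add_comm (A₃ * B₂), add_comm B₂.rank] at this

end Matrix

/-- Decomposition (5): if `P = A · B` where the leading principal block `A₄` of `A`
and the trailing principal block `B₁` of `B` are invertible, then
`rank A₃ + rank B₃ ≥ r₃` and `rank A₂ + rank B₂ ≥ max (r₂, n + m - r₁ - r₄)`. -/
theorem stmt_3 {K : Type*} [Field K] {m n : ℕ}
    (P₄ : Matrix (Fin m) (Fin m) K) (P₃ : Matrix (Fin m) (Fin n) K)
    (P₂ : Matrix (Fin n) (Fin m) K) (P₁ : Matrix (Fin n) (Fin n) K)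
    (hP : IsUnit (Matrix.fromBlocks P₄ P₃ P₂ P₁))
    (A₄ : Matrix (Fin m) (Fin m) K) (A₃ : Matrix (Fin m) (Fin n) K)
    (A₂ : Matrix (Fin n) (Fin m) K) (A₁ : Matrix (Fin n) (Fin n) K)
    (B₄ : Matrix (Fin m) (Fin m) K) (B₃ : Matrix (Fin m) (Fin n) K)
    (B₂ : Matrix (Fin n) (Fin m) K) (B₁ : Matrix (Fin n) (Fin n) K)
    (hAB : Matrix.fromBlocks P₄ P₃ P₂ P₁ =
      Matrix.fromBlocks A₄ A₃ A₂ A₁ * Matrix.fromBlocks B₄ B₃ B₂ B₁)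
    (hA₄ : IsUnit A₄) (hB₁ : IsUnit B₁) :
    A₃.rank + B₃.rank ≥ P₃.rank ∧
    A₂.rank + B₂.rank ≥ max P₂.rank (n + m - P₁.rank - P₄.rank) := by
  rw [hAB] at hP
  obtain ⟨Y, W, hrow⟩ := exists_bottom_row_right_inv_of_isUnit_fromBlocks
    (isUnit_of_mul_isUnit_left hP)
  obtain ⟨Y', W', hcol⟩ := exists_left_column_left_inv_of_isUnit_fromBlocks
    (isUnit_of_mul_isUnit_right hP)
  obtain ⟨rfl, rfl, rfl, rfl⟩ := fromBlocks_inj.mp (hAB.trans (fromBlocks_multiply ..))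
  have hn := card_le_rank_add_rank_mul_add_mul_of_right_inv hrow B₃ hB₁
  have hm := card_le_rank_mul_add_mul_add_rank_of_left_inv hcol hA₄ A₃
  have hP₃ : (A₄ * B₃ + A₃ * B₁).rank ≤ B₃.rank + A₃.rank :=
    (rank_add_le _ _).trans (add_le_add (rank_mul_le_right _ _) (rank_mul_le_left _ _))
  have hP₂ : (A₂ * B₄ + A₁ * B₂).rank ≤ A₂.rank + B₂.rank :=
    (rank_add_le _ _).trans (add_le_add (rank_mul_le_left _ _) (rank_mul_le_right _ _))
  rw [Fintype.card_fin] at hn hm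
  exact ⟨by omega, max_le hP₂ (by omega)⟩
end

section
/- Let L be an n×m matrix over K such that for every vector v in im P₄ there exists u ∈ Kᵐ with P₄u = v and Lv = P₂u (i.e., Lv ∈ P₂(P₄⁻¹({v}))). Then rank(P₂ − L·P₄) + r₄ = m. -/
/-!
Invertibility of the block matrix makes `P₂` injective on `ker P₄`, and the hypothesis on `L`
makes `im (P₂ - L P₄) = P₂ (ker P₄)`. Hence `rank (P₂ - L P₄) = dim ker P₄ = m - r₄`.
-/

open Matrix LinearMap

theorem Submodule.finrank_map_eq_of_disjoint_ker {K V W : Type*} [DivisionRing K]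
    [AddCommGroup V] [Module K V] [AddCommGroup W] [Module K W]
    (f : V →ₗ[K] W) {S : Submodule K V} (h : Disjoint S (ker f)) :
    Module.finrank K (S.map f) = Module.finrank K S := by
  rw [← range_domRestrict]
  exact finrank_range_of_inj (injective_domRestrict_iff.mpr h)

theorem Matrix.disjoint_ker_mulVecLin_of_isUnit_fromBlocks {R l m : Type*} [CommSemiring R]
    [Fintype l] [Fintype m] [DecidableEq l] [DecidableEq m]
    {A : Matrix l l R} {B : Matrix l m R} {C : Matrix m l R} {D : Matrix m m R}
    (h : IsUnit (fromBlocks A B C D)) :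
    Disjoint (ker A.mulVecLin) (ker C.mulVecLin) := by
  rw [Submodule.disjoint_def]
  intro u hA hC
  rw [mem_ker, mulVecLin_apply] at hA hC
  have hblock : fromBlocks A B C D *ᵥ Sum.elim u 0 = fromBlocks A B C D *ᵥ 0 := by
    rw [fromBlocks_mulVec, mulVec_zero]
    simp [hA, hC]
  have h0 : (Sum.elim u 0 : l ⊕ m → R) = 0 := mulVec_injective_of_isUnit h hblock
  funext i
  exact congrFun h0 (Sum.inl i)

/-- If `A u' = A u` and `L (A u) = C u'`, then `(C - L A) u = C (u - u')`
with `u - u' ∈ ker A`. -/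
theorem Matrix.range_mulVecLin_sub_mul_eq_map_ker {R l m n : Type*} [CommRing R]
    [Fintype l] [Fintype m] {A : Matrix l m R} {C : Matrix n m R} {L : Matrix n l R}
    (hL : ∀ v ∈ range A.mulVecLin, ∃ u, A *ᵥ u = v ∧ L *ᵥ v = C *ᵥ u) :
    range (C - L * A).mulVecLin = (ker A.mulVecLin).map C.mulVecLin := by
  apply le_antisymm
  · rintro _ ⟨u, rfl⟩
    obtain ⟨u', hu', hLu'⟩ := hL (A *ᵥ u) ⟨u, rfl⟩
    refine ⟨u - u', ?_, ?_⟩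
    · simp [mulVec_sub, hu']
    · simp only [mulVecLin_apply, sub_mulVec, mulVec_sub, ← mulVec_mulVec, hLu']
  · rintro _ ⟨u, hu, rfl⟩
    refine ⟨u, ?_⟩
    rw [SetLike.mem_coe, mem_ker, mulVecLin_apply] at hu
    rw [mulVecLin_apply, mulVecLin_apply, sub_mulVec, ← mulVec_mulVec, hu, mulVec_zero, sub_zero]

/-- Lemma: if for every `v ∈ im P₄` we have `Lv ∈ P₂(P₄⁻¹({v}))`, then
`rank (P₂ - L·P₄) = m - r₄`. -/
theorem stmt_13 {K : Type*} [Field K] {m n : ℕ}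
    (P₄ : Matrix (Fin m) (Fin m) K) (P₃ : Matrix (Fin m) (Fin n) K)
    (P₂ : Matrix (Fin n) (Fin m) K) (P₁ : Matrix (Fin n) (Fin n) K)
    (hP : IsUnit (Matrix.fromBlocks P₄ P₃ P₂ P₁))
    (L : Matrix (Fin n) (Fin m) K)
    (hL : ∀ v ∈ LinearMap.range P₄.mulVecLin,
      ∃ u : Fin m → K, P₄.mulVec u = v ∧ L.mulVec v = P₂.mulVec u) :
    (P₂ - L * P₄).rank + P₄.rank = m := by
  calc (P₂ - L * P₄).rank + P₄.rank
      = Module.finrank K (ker P₄.mulVecLin) + P₄.rank := by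
        rw [Matrix.rank, range_mulVecLin_sub_mul_eq_map_ker hL,
          Submodule.finrank_map_eq_of_disjoint_ker _
            (disjoint_ker_mulVecLin_of_isUnit_fromBlocks hP)]
    _ = m := by
        rw [Matrix.rank, add_comm, finrank_range_add_finrank_ker, Module.finrank_fin_fun]
end
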